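/- Let m ≥ 1, M > 0, let f = v₁χ_{[0,ℓ₁)} + ⋯ + v_{m+1}χ_{[ℓ₁+⋯+ℓ_m,1)} ∈ C_{m,M} with length vector ℓ and value vector v, and set Γ = min{ℓ₁,…,ℓ_{m+1}}. For every 1 ≤ i ≤ m and every ζ ∈ ℝ with |ζ| < Γ/2, the nudged function nudge(f, i, ζ) ∈ C_{m,M} (defined below) satisfies |ζ| ≤ dist(f, nudge(f, i, ζ)) ≤ |ζ| · max{1, 4M/Γ}, where dist is the ℓ∞ distance between the parameter vectors in P_{m,M}. -/

import Mathlib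

open MeasureTheory Set Filter

noncomputable section

/-- Irreducibility of a pair of permutations `(π₀, π₁)` on an alphabet of `d` letters:
no `k ∈ {1, …, d-1}` satisfies `π₁ ∘ π₀⁻¹ ({1,…,k}) = {1,…,k}` (here `0`-indexed). -/
def IsIrreduciblePerm (d : ℕ) (p0 p1 : Equiv.Perm (Fin d)) : Prop :=
  ∀ k : ℕ, 0 < k → k < d →
    (fun j => p1 (p0.symm j)) '' {j : Fin d | (j : ℕ) < k} ≠ {j : Fin d | (j : ℕ) < k}

/-- The length vector lies in the open unit simplex `Λ^𝒜`. -/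
def IsLengthVector (d : ℕ) (l : Fin d → ℝ) : Prop :=
  (∀ α, 0 < l α) ∧ ∑ α, l α = 1

/-- Left endpoint of the interval `I_α` (with respect to the ordering permutation `p`). -/
def leftEnd {d : ℕ} (p : Equiv.Perm (Fin d)) (l : Fin d → ℝ) (α : Fin d) : ℝ :=
  ∑ β ∈ Finset.univ.filter (fun β => p β < p α), l β

/-- The IET `T_{π,λ}`: each interval `I_α = [leftEnd π₀ λ α, leftEnd π₀ λ α + λ α)` is
translated so that its new left endpoint is `leftEnd π₁ λ α`; extended by the identity. -/
def ietMap {d : ℕ} (p0 p1 : Equiv.Perm (Fin d)) (l : Fin d → ℝ) (x : ℝ) : ℝ :=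
  if h : ∃ α, x ∈ Set.Ico (leftEnd p0 l α) (leftEnd p0 l α + l α) then
    x + (leftEnd p1 l h.choose - leftEnd p0 l h.choose)
  else x

/-- Membership in the parameter space `P_{m,M}`. -/
def memP (m : ℕ) (M : ℝ) (pq : (Fin (m + 1) → ℝ) × (Fin (m + 1) → ℝ)) : Prop :=
  (∀ i, 0 < pq.1 i) ∧ (∑ i, pq.1 i * pq.2 i = 0) ∧ (∑ i, pq.1 i = 1) ∧ ∀ i, |pq.2 i| ≤ M

/-- Left endpoint of the `i`-th step interval. -/
def stepBreak {m : ℕ} (p : Fin (m + 1) → ℝ) (i : Fin (m + 1)) : ℝ :=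
  ∑ j ∈ Finset.univ.filter (fun j => j < i), p j

/-- The step function with lengths `p` and values `q`. -/
def stepFun {m : ℕ} (p q : Fin (m + 1) → ℝ) (x : ℝ) : ℝ :=
  if h : ∃ i, x ∈ Set.Ico (stepBreak p i) (stepBreak p i + p i) then q h.choose else 0

/-- The skew product `T_f (x, t) = (T x, t + f x)`. -/
def skew (T f : ℝ → ℝ) : ℝ × ℝ → ℝ × ℝ := fun z => (T z.1, z.2 + f z.1)

/-- Lebesgue measure on `[0,1) × ℝ`. -/
def stripMeasure : Measure (ℝ × ℝ) := (volume.restrict (Set.Ico (0 : ℝ) 1)).prod volume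

/-- Lebesgue measure on the simplex `Λ^𝒜` (for an alphabet `𝒜` of cardinality `d + 1`),
via the parametrization by the first `d` coordinates. -/
def simplexMeasure (d : ℕ) : Measure (Fin (d + 1) → ℝ) :=
  Measure.map (fun v : Fin d → ℝ => Fin.snoc v (1 - ∑ i, v i)) volume

/-- Lebesgue measure on the parameter space of `C_{m,M}`, via the parametrization by the
first `m` coordinates of `p` and of `q` (the last ones are determined by `|p|₁ = 1` and
`⟨p, q⟩ = 0`). -/
def cocycleMeasure (m : ℕ) : Measure ((Fin (m + 1) → ℝ) × (Fin (m + 1) → ℝ)) :=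
  Measure.map
    (fun v : (Fin m → ℝ) × (Fin m → ℝ) =>
      (Fin.snoc v.1 (1 - ∑ i, v.1 i),
        Fin.snoc v.2 (-(∑ i, v.1 i * v.2 i) / (1 - ∑ i, v.1 i))))
    volume

/-- Nudging the `i`-th discontinuity of the step function with parameters `(p, q)` by `ζ`
(`i` ranges over the `m` interior discontinuities, `0`-indexed): the lengths become
`(…, p_i + ζ, p_{i+1} - ζ, …)` and the value on the `(i+1)`-st interval becomes
`(q_{i+1} p_{i+1} - ζ q_i) / (p_{i+1} - ζ)`. -/
def nudge {m : ℕ} (pq : (Fin (m + 1) → ℝ) × (Fin (m + 1) → ℝ)) (i : Fin m) (ζ : ℝ) :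
    (Fin (m + 1) → ℝ) × (Fin (m + 1) → ℝ) :=
  (Function.update (Function.update pq.1 i.castSucc (pq.1 i.castSucc + ζ)) i.succ
      (pq.1 i.succ - ζ),
    Function.update pq.2 i.succ
      ((pq.2 i.succ * pq.1 i.succ - ζ * pq.2 i.castSucc) / (pq.1 i.succ - ζ)))

/-!
Nudging changes the lengths only at the two intervals adjacent to the `i`-th discontinuity,
each by exactly `|ζ|`, and the values only on the `(i+1)`-st interval, by
`ζ (q_i - q_{i+1}) / (p_{i+1} - ζ)`. Since `|q_i - q_{i+1}| ≤ 2M` and `p_{i+1} - ζ > Γ/2`,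
the latter is at most `|ζ| · 4M/Γ`; the `ℓ∞` distance is the maximum of the two.
-/

section

variable {m : ℕ} (pq : (Fin (m + 1) → ℝ) × (Fin (m + 1) → ℝ)) (i : Fin m) (ζ : ℝ)

theorem nudge_fst_apply_castSucc : (nudge pq i ζ).1 i.castSucc = pq.1 i.castSucc + ζ := by
  simp [nudge, Function.update_of_ne Fin.castSucc_lt_succ.ne]

theorem nudge_fst_apply_succ : (nudge pq i ζ).1 i.succ = pq.1 i.succ - ζ := by
  simp [nudge]

theorem nudge_fst_apply_of_ne {j : Fin (m + 1)} (hc : j ≠ i.castSucc) (hs : j ≠ i.succ) :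
    (nudge pq i ζ).1 j = pq.1 j := by
  simp [nudge, Function.update_of_ne hc, Function.update_of_ne hs]

theorem nudge_snd_apply_of_ne {j : Fin (m + 1)} (hs : j ≠ i.succ) :
    (nudge pq i ζ).2 j = pq.2 j := by
  simp [nudge, Function.update_of_ne hs]

theorem nudge_dist_snd_apply_succ (hζ : ζ ≠ pq.1 i.succ) :
    dist (pq.2 i.succ) ((nudge pq i ζ).2 i.succ) =
      |ζ| * |pq.2 i.castSucc - pq.2 i.succ| / |pq.1 i.succ - ζ| := by
  have hd : pq.1 i.succ - ζ ≠ 0 := sub_ne_zero.2 hζ.symm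
  rw [Real.dist_eq, ← abs_mul, ← abs_div]
  congr 1
  simp only [nudge, Function.update_self]
  field_simp
  ring

theorem nudge_dist_fst : dist pq.1 (nudge pq i ζ).1 = |ζ| := by
  refine le_antisymm ((dist_pi_le_iff (abs_nonneg ζ)).2 fun j => ?_) ?_
  · by_cases hs : j = i.succ
    · subst hs
      rw [nudge_fst_apply_succ, Real.dist_eq, sub_sub_cancel]
    by_cases hc : j = i.castSucc
    · subst hc
      rw [nudge_fst_apply_castSucc, Real.dist_eq, sub_add_cancel_left, abs_neg]
    rw [nudge_fst_apply_of_ne pq i ζ hc hs, dist_self]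
    exact abs_nonneg ζ
  · calc |ζ| = dist (pq.1 i.castSucc) ((nudge pq i ζ).1 i.castSucc) := by
          rw [nudge_fst_apply_castSucc, Real.dist_eq, sub_add_cancel_left, abs_neg]
      _ ≤ dist pq.1 (nudge pq i ζ).1 := dist_le_pi_dist _ _ _

theorem nudge_dist_snd_le {M Γ : ℝ} (hq : ∀ j, |pq.2 j| ≤ M) (hΓ : Γ ≤ pq.1 i.succ)
    (hζ : |ζ| < Γ / 2) : dist pq.2 (nudge pq i ζ).2 ≤ |ζ| * (4 * M / Γ) := by
  have hΓpos : 0 < Γ := by linarith [abs_nonneg ζ]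
  have hM : 0 ≤ M := (abs_nonneg _).trans (hq 0)
  have hgap : Γ / 2 < pq.1 i.succ - ζ := by linarith [le_abs_self ζ]
  refine (dist_pi_le_iff (by positivity)).2 fun j => ?_
  by_cases hs : j = i.succ
  · subst hs
    have hjump : |pq.2 i.castSucc - pq.2 i.succ| ≤ 2 * M := by
      linarith [abs_sub (pq.2 i.castSucc) (pq.2 i.succ), hq i.castSucc, hq i.succ]
    calc dist (pq.2 i.succ) ((nudge pq i ζ).2 i.succ)
        = |ζ| * |pq.2 i.castSucc - pq.2 i.succ| / |pq.1 i.succ - ζ| :=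
          nudge_dist_snd_apply_succ pq i ζ (by linarith)
      _ ≤ |ζ| * (2 * M) / (Γ / 2) := by
          rw [abs_of_pos (by linarith : 0 < pq.1 i.succ - ζ)]
          gcongr
      _ = |ζ| * (4 * M / Γ) := by ring
  · rw [nudge_snd_apply_of_ne pq i ζ hs, dist_self]
    positivity

end

theorem stmt4_general (m : ℕ) (M : ℝ)
    (pq : (Fin (m + 1) → ℝ) × (Fin (m + 1) → ℝ)) (hpq : memP m M pq)
    (i : Fin m) (ζ : ℝ)
    (hζ : |ζ| < Finset.univ.inf' Finset.univ_nonempty pq.1 / 2) :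
    |ζ| ≤ dist pq (nudge pq i ζ) ∧
      dist pq (nudge pq i ζ) ≤
        |ζ| * max 1 (4 * M / Finset.univ.inf' Finset.univ_nonempty pq.1) := by
  set Γ := Finset.univ.inf' Finset.univ_nonempty pq.1
  have hsnd : dist pq.2 (nudge pq i ζ).2 ≤ |ζ| * (4 * M / Γ) :=
    nudge_dist_snd_le pq i ζ hpq.2.2.2 (Finset.inf'_le _ (Finset.mem_univ _)) hζ
  rw [Prod.dist_eq, nudge_dist_fst]
  refine ⟨le_max_left _ _, max_le ?_ ?_⟩
  · exact le_mul_of_one_le_right (abs_nonneg ζ) (le_max_left _ _)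
  · exact hsnd.trans (mul_le_mul_of_nonneg_left (le_max_right _ _) (abs_nonneg ζ))

/-- For `f ∈ C_{m,M}` with parameters `pq`, `Γ = min_j p_j` and
`|ζ| < Γ/2`, the nudged parameters satisfy
`|ζ| ≤ dist(pq, nudge(pq, i, ζ)) ≤ |ζ| · max {1, 4M/Γ}` in the `ℓ∞` metric (which is
the distance `dist` of the product of sup-metric spaces). -/
theorem stmt4 (m : ℕ) (hm : 1 ≤ m) (M : ℝ) (hM : 0 < M)
    (pq : (Fin (m + 1) → ℝ) × (Fin (m + 1) → ℝ)) (hpq : memP m M pq)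
    (i : Fin m) (ζ : ℝ)
    (hζ : |ζ| < Finset.univ.inf' Finset.univ_nonempty pq.1 / 2) :
    |ζ| ≤ dist pq (nudge pq i ζ) ∧
      dist pq (nudge pq i ζ) ≤
        |ζ| * max 1 (4 * M / Finset.univ.inf' Finset.univ_nonempty pq.1) :=
  stmt4_general m M pq hpq i ζ hζ
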